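/- arXiv:math/9201213 — 3 statements merged into one kernel-verified Lean document; each statement's English description precedes it below -/
import Mathlib

section
/- Let π be a permutation of the dyadic intervals with |π(I)| = |I| for all I and K = sup_B |(π⁻¹(B))*|/|B*| < ∞. Then the operator T_π defined by T_π h_I = h_{π(I)} extends to a bounded operator on dyadic BMO with ‖T_π‖² ≤ 2K. -/
open MeasureTheory ENNReal

/-- A dyadic subinterval of `[0,1]`: `[k/2^n, (k+1)/2^n)`. -/
structure DyadicI where
  n : ℕ
  k : ℕ
  hk : k < 2 ^ n

namespace DyadicI

/-- The underlying set of a dyadic interval. -/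
noncomputable def toSet (I : DyadicI) : Set ℝ :=
  Set.Ico ((I.k : ℝ) / 2 ^ I.n) ((I.k + 1 : ℝ) / 2 ^ I.n)

/-- The length `|I| = 2^{-n}`. -/
noncomputable def len (I : DyadicI) : ℝ≥0∞ := (2 ^ I.n : ℝ≥0∞)⁻¹

/-- Containment of dyadic intervals. -/
def le (J I : DyadicI) : Prop := J.toSet ⊆ I.toSet

/-- The measure of the pointset covered by a collection of dyadic intervals. -/
noncomputable def star (B : Set DyadicI) : ℝ≥0∞ :=
  volume (⋃ I ∈ B, I.toSet)

/-- The Carleson constant of a collection of dyadic intervals. -/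
noncomputable def carleson (B : Set DyadicI) : ℝ≥0∞ :=
  ⨆ I : DyadicI, (len I)⁻¹ * ∑' J : {J : DyadicI // J ∈ B ∧ le J I}, len (J : DyadicI)

/-- Maximal intervals of a collection. -/
def maxB (B : Set DyadicI) : Set DyadicI :=
  {I | I ∈ B ∧ ∀ J ∈ B, le I J → J = I}

/-- Squared dyadic BMO norm of a coefficient family, sup over collections. -/
noncomputable def bmoSq (x : DyadicI → ℝ) : ℝ≥0∞ :=
  ⨆ B : Set DyadicI,
    (star B)⁻¹ * ∑' I : B, ENNReal.ofReal (x I ^ 2) * len (I : DyadicI)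

/-- Squared dyadic BMO norm of a coefficient family, sup over dyadic intervals. -/
noncomputable def bmoSq' (x : DyadicI → ℝ) : ℝ≥0∞ :=
  ⨆ I : DyadicI,
    (len I)⁻¹ * ∑' J : {J : DyadicI // le J I}, ENNReal.ofReal (x J ^ 2) * len (J : DyadicI)

end DyadicI

open DyadicI

lemma vol_toSet (I : DyadicI) : volume I.toSet = I.len := by
  rw [toSet, Real.volume_Ico, len]
  have h : ((I.k:ℝ)+1)/2^I.n - I.k/2^I.n = ((2:ℝ)^I.n)⁻¹ := by
    field_simp
    ring
  rw [h, ENNReal.ofReal_inv_of_pos (by positivity), ENNReal.ofReal_pow (by norm_num)]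
  norm_num

lemma toSet_subset (I : DyadicI) : I.toSet ⊆ Set.Ico (0:ℝ) 1 := by
  apply Set.Ico_subset_Ico
  · positivity
  · rw [div_le_one (by positivity)]
    have := I.hk
    exact_mod_cast Nat.succ_le_of_lt this

lemma star_le_one (B : Set DyadicI) : star B ≤ 1 := by
  have : (⋃ I ∈ B, I.toSet) ⊆ Set.Ico (0:ℝ) 1 :=
    Set.iUnion₂_subset fun I _ => toSet_subset I
  calc star B ≤ volume (Set.Ico (0:ℝ) 1) := measure_mono this
    _ = 1 := by simp

lemma len_ne_zero (I : DyadicI) : I.len ≠ 0 := by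
  simp [len]

lemma star_ne_zero' {B : Set DyadicI} (hB : B.Nonempty) : star B ≠ 0 := by
  obtain ⟨I, hI⟩ := hB
  have : I.len ≤ star B := by
    rw [← vol_toSet]
    exact measure_mono (Set.subset_biUnion_of_mem hI)
  exact fun h => len_ne_zero I (le_antisymm (h ▸ this) (zero_le))

lemma star_ne_top' (B : Set DyadicI) : star B ≠ ∞ :=
  ne_top_of_le_ne_top one_ne_top (star_le_one B)

/-- measure preserving permutations with finite Semyonov constant `K`
induce a bounded operator on dyadic BMO with `‖T_π‖² ≤ 2K`. -/
theorem semyonov_bmo_bounded (π : Equiv.Perm DyadicI)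
    (hlen : ∀ I, len (π I) = len I)
    (K : ℝ≥0∞)
    (hK : K = ⨆ B : Set DyadicI, star (π.symm '' B) / star B)
    (hKfin : K ≠ ∞) (x : DyadicI → ℝ) :
    bmoSq (fun I => x (π.symm I)) ≤ 2 * K * bmoSq x := by
  rw [bmoSq]
  apply iSup_le
  intro B
  set C : Set DyadicI := (π.symm : DyadicI ≃ DyadicI) '' B with hCdef
  have hsum : (∑' I : B, ENNReal.ofReal ((fun I => x (π.symm I)) (I:DyadicI) ^ 2)
        * len (I : DyadicI))
      = ∑' J : C, ENNReal.ofReal (x (J:DyadicI) ^ 2) * len (J : DyadicI) := by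
    rw [← Equiv.tsum_eq ((π.symm : DyadicI ≃ DyadicI).image B)
      (fun J : C => ENNReal.ofReal (x (J:DyadicI) ^ 2) * len (J : DyadicI))]
    refine tsum_congr fun I => ?_
    have h1 : ((((π.symm : DyadicI ≃ DyadicI).image B) I : C) : DyadicI)
        = π.symm (I : DyadicI) := rfl
    rw [h1]
    have h2 : len (π.symm (I : DyadicI)) = len (I : DyadicI) := by
      conv_rhs => rw [← Equiv.apply_symm_apply π (I : DyadicI), hlen]
    rw [h2]
  rw [hsum]
  rcases B.eq_empty_or_nonempty with hB | hB
  · have hCe : C = ∅ := by simp [hCdef, hB]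
    rw [hCe]
    simp [tsum_empty]
  · have hCne : C.Nonempty := hB.image _
    have hB0 : star B ≠ 0 := star_ne_zero' hB
    have hBt : star B ≠ ∞ := star_ne_top' B
    have hC0 : star C ≠ 0 := star_ne_zero' hCne
    have hCt : star C ≠ ∞ := star_ne_top' C
    set S : ℝ≥0∞ := ∑' J : C, ENNReal.ofReal (x (J:DyadicI) ^ 2) * len (J : DyadicI)
    have hKC : star C ≤ K * star B := by
      have h1 : star C / star B ≤ K := by
        rw [hK]
        exact le_iSup (fun B => star ((π.symm : DyadicI ≃ DyadicI) '' B) / star B) B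
      exact (ENNReal.div_le_iff_le_mul (Or.inl hB0) (Or.inl hBt)).mp h1
    have hSC : S ≤ star C * bmoSq x := by
      have h2 : (star C)⁻¹ * S ≤ bmoSq x :=
        le_iSup (fun B : Set DyadicI =>
          (star B)⁻¹ * ∑' I : B, ENNReal.ofReal (x (I:DyadicI) ^ 2) * len (I : DyadicI)) C
      calc S = star C * ((star C)⁻¹ * S) := by
            rw [← mul_assoc, ENNReal.mul_inv_cancel hC0 hCt, one_mul]
        _ ≤ star C * bmoSq x := mul_le_mul_right h2 _
    calc (star B)⁻¹ * S ≤ (star B)⁻¹ * (star C * bmoSq x) := mul_le_mul_right hSC _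
      _ ≤ (star B)⁻¹ * ((K * star B) * bmoSq x) := by gcongr
      _ = K * bmoSq x := by
          rw [mul_comm K (star B), mul_assoc (star B) K, ← mul_assoc,
            ENNReal.inv_mul_cancel hB0 hBt, one_mul]
      _ ≤ 2 * K * bmoSq x :=
          mul_le_mul_left (le_mul_of_one_le_left' one_le_two) _
end

section
/- Let π be a permutation of the dyadic intervals such that T_π h_I = h_{π(I)} defines a bounded operator on dyadic BMO with bounded inverse T_{π⁻¹}. Then there exists M > 0 such that for every collection B of dyadic intervals, (1/M)[[B]] ≤ [[π(B)]] ≤ M[[B]]. -/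
/-! The Carleson constant of `B` is the squared BMO norm of the indicator `𝟙_B = Σ_{I ∈ B} h_I`
(in Haar coordinates), and `T_π` sends `𝟙_B` to `𝟙_{π(B)}`. So boundedness of `T_π` gives
`[[π(B)]] ≤ C [[B]]`, boundedness of `T_{π⁻¹}` gives `[[B]] ≤ C [[π(B)]]`, and `M = C + 1` works (`C` itself may be `0`). -/

open MeasureTheory ENNReal

open DyadicI

lemma carleson_eq_bmoSq'_indicator (B : Set DyadicI) :
    carleson B = bmoSq' (B.indicator 1) := by
  unfold carleson bmoSq'
  refine iSup_congr fun I => congrArg _ ?_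
  refine (tsum_subtype {J | J ∈ B ∧ le J I} len).trans <| Eq.trans ?_
    (tsum_subtype {J | le J I} fun J => ENNReal.ofReal (B.indicator 1 J ^ 2) * len J).symm
  refine tsum_congr fun J => ?_
  by_cases hB : J ∈ B <;> by_cases hI : le J I <;> simp [Set.indicator, hB, hI]

lemma carleson_image_le_of_bmoSq'_comp_symm_le (e : Equiv.Perm DyadicI) {C : ℝ≥0∞}
    (he : ∀ x : DyadicI → ℝ, bmoSq' (fun I => x (e.symm I)) ≤ C * bmoSq' x) (B : Set DyadicI) :
    carleson (e '' B) ≤ C * carleson B := by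
  rw [carleson_eq_bmoSq'_indicator, carleson_eq_bmoSq'_indicator, e.image_eq_preimage_symm]
  exact he (B.indicator 1)

/-- if the permutation operator `T_π` is bounded on dyadic BMO together
with its inverse `T_{π⁻¹}`, then `π` distorts Carleson constants by at most a
multiplicative constant. -/
theorem carleson_bound_of_bmo_isomorphism (π : Equiv.Perm DyadicI)
    (C : ℝ≥0∞) (hC : C ≠ ∞)
    (hbdd : ∀ x : DyadicI → ℝ, bmoSq' (fun I => x (π.symm I)) ≤ C * bmoSq' x)
    (hbdd' : ∀ x : DyadicI → ℝ, bmoSq' (fun I => x (π I)) ≤ C * bmoSq' x) :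
    ∃ M : ℝ≥0∞, 0 < M ∧ M ≠ ∞ ∧ ∀ B : Set DyadicI,
      M⁻¹ * carleson B ≤ carleson (π '' B) ∧ carleson (π '' B) ≤ M * carleson B := by
  have hM : C + 1 ≠ ∞ := add_ne_top.mpr ⟨hC, one_ne_top⟩
  refine ⟨C + 1, by positivity, hM, fun B => ⟨?_, ?_⟩⟩
  · rw [ENNReal.inv_mul_le_iff (by positivity) hM]
    calc carleson B = carleson (π.symm '' (π '' B)) := by rw [Equiv.symm_image_image]
      _ ≤ C * carleson (π '' B) := carleson_image_le_of_bmoSq'_comp_symm_le π.symm hbdd' _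
      _ ≤ (C + 1) * carleson (π '' B) := by gcongr; exact le_self_add
  · calc carleson (π '' B) ≤ C * carleson B := carleson_image_le_of_bmoSq'_comp_symm_le π hbdd B
      _ ≤ (C + 1) * carleson B := by gcongr; exact le_self_add
end

section
/- Let M ≥ 1 and let N be a collection of dyadic intervals which is a disjoint union of subcollections N(P) indexed by intervals P from a collection O satisfying the 2-Carleson condition, such that: (i) each N(P) satisfies the M-Carleson condition and N(P)* ⊆ P, and (ii) for each P ∈ O and each I ∈ N(P), every J ∈ N with J ⊆ I and J ∉ N(P) lies in some N(L) with L ∈ O, L ⊆ P, and N(L)* ⊆ L ⊆ I. Then N satisfies the 3M-Carleson condition: for every I ∈ N, Σ_{J∈N, J⊆I} |J| ≤ 3M|I|. -/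
open MeasureTheory ENNReal

open DyadicI

/-- Claim 2: if `N` is a disjoint union of collections `N(P)` indexed by
`P ∈ O`, where `O` satisfies the 2-Carleson condition, each `N(P)` satisfies the
`M`-Carleson condition with `N(P)* ⊆ P`, and intervals of `N` below `I ∈ N(P)` lie either
in `N(P)` or in some `N(L)` with `L ∈ O`, `L ⊆ I`, then `N` satisfies the
`3M`-Carleson condition. -/
theorem union_three_M_carleson (M : ℝ≥0∞) (hM : 1 ≤ M)
    (O : Set DyadicI)
    (hO : ∀ I : DyadicI,
      ∑' L : {L : DyadicI // L ∈ O ∧ le L I}, len (L : DyadicI) ≤ 2 * len I)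
    (NP : DyadicI → Set DyadicI)
    (hNPsub : ∀ P ∈ O, ∀ J ∈ NP P, le J P)
    (hNPcar : ∀ P ∈ O, ∀ I : DyadicI,
      ∑' J : {J : DyadicI // J ∈ NP P ∧ le J I}, len (J : DyadicI) ≤ M * len I)
    (hNPdisj : ∀ P ∈ O, ∀ Q ∈ O, P ≠ Q → Disjoint (NP P) (NP Q))
    (N : Set DyadicI) (hN : N = ⋃ P ∈ O, NP P)
    (hkey : ∀ P ∈ O, ∀ I ∈ NP P, ∀ J ∈ N, le J I →
      J ∈ NP P ∨ ∃ L ∈ O, le L I ∧ J ∈ NP L) :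
    ∀ I ∈ N, ∑' J : {J : DyadicI // J ∈ N ∧ le J I}, len (J : DyadicI)
      ≤ 3 * M * len I := by
  intro I hI
  rw [hN] at hI
  obtain ⟨P, hP, hIP⟩ := Set.mem_iUnion₂.mp hI
  have key : ∀ J : DyadicI,
      Set.indicator {J | J ∈ N ∧ le J I} len J ≤
      Set.indicator {J | J ∈ NP P ∧ le J I} len J +
      ∑' L : {L : DyadicI // L ∈ O ∧ le L I},
        Set.indicator {J | J ∈ NP (L : DyadicI) ∧ le J I} len J := by
    intro J
    by_cases hJ : J ∈ {J | J ∈ N ∧ le J I}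
    · rw [Set.indicator_of_mem hJ]
      obtain ⟨hJN, hJI⟩ := hJ
      rcases hkey P hP I hIP J hJN hJI with h | ⟨L, hL, hLI, hJL⟩
      · exact le_add_right (le_of_eq (Set.indicator_of_mem (show J ∈ {J | J ∈ NP P ∧ le J I} from ⟨h, hJI⟩) len).symm)
      · calc len J
            = Set.indicator {J | J ∈ NP L ∧ le J I} len J :=
              (Set.indicator_of_mem (show J ∈ {J | J ∈ NP L ∧ le J I} from ⟨hJL, hJI⟩) len).symm
          _ ≤ ∑' L' : {L : DyadicI // L ∈ O ∧ le L I},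
              Set.indicator {J | J ∈ NP (L' : DyadicI) ∧ le J I} len J :=
              ENNReal.le_tsum (⟨L, hL, hLI⟩ : {L : DyadicI // L ∈ O ∧ le L I})
          _ ≤ _ := le_add_self
    · simp [Set.indicator_of_notMem hJ]
  have hLbound : ∀ L : {L : DyadicI // L ∈ O ∧ le L I},
      (∑' J : DyadicI, Set.indicator {J | J ∈ NP (L : DyadicI) ∧ le J I} len J)
        ≤ M * len (L : DyadicI) := by
    intro L
    calc (∑' J : DyadicI, Set.indicator {J | J ∈ NP (L : DyadicI) ∧ le J I} len J)
        ≤ ∑' J : DyadicI,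
            Set.indicator {J | J ∈ NP (L : DyadicI) ∧ le J (L : DyadicI)} len J := by
          refine ENNReal.tsum_le_tsum fun J => ?_
          refine Set.indicator_le_indicator_of_subset ?_ (fun _ => zero_le) J
          rintro J ⟨h1, _⟩
          exact ⟨h1, hNPsub _ L.2.1 J h1⟩
      _ = ∑' J : {J : DyadicI // J ∈ NP (L : DyadicI) ∧ le J (L : DyadicI)},
            len (J : DyadicI) := (tsum_subtype _ _).symm
      _ ≤ M * len (L : DyadicI) := hNPcar _ L.2.1 _
  calc ∑' J : {J : DyadicI // J ∈ N ∧ le J I}, len (J : DyadicI)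
      = ∑' J : DyadicI, Set.indicator {J | J ∈ N ∧ le J I} len J := tsum_subtype _ _
    _ ≤ ∑' J : DyadicI, (Set.indicator {J | J ∈ NP P ∧ le J I} len J +
        ∑' L : {L : DyadicI // L ∈ O ∧ le L I},
          Set.indicator {J | J ∈ NP (L : DyadicI) ∧ le J I} len J) :=
        ENNReal.tsum_le_tsum key
    _ = (∑' J : DyadicI, Set.indicator {J | J ∈ NP P ∧ le J I} len J) +
        ∑' J : DyadicI, ∑' L : {L : DyadicI // L ∈ O ∧ le L I},
          Set.indicator {J | J ∈ NP (L : DyadicI) ∧ le J I} len J :=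
        ENNReal.tsum_add
    _ = (∑' J : {J : DyadicI // J ∈ NP P ∧ le J I}, len (J : DyadicI)) +
        ∑' L : {L : DyadicI // L ∈ O ∧ le L I}, ∑' J : DyadicI,
          Set.indicator {J | J ∈ NP (L : DyadicI) ∧ le J I} len J := by
        rw [← tsum_subtype, ENNReal.tsum_comm]; rfl
    _ ≤ M * len I + ∑' L : {L : DyadicI // L ∈ O ∧ le L I}, M * len (L : DyadicI) :=
        add_le_add (hNPcar P hP I) (ENNReal.tsum_le_tsum hLbound)
    _ = M * len I + M * ∑' L : {L : DyadicI // L ∈ O ∧ le L I}, len (L : DyadicI) := by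
        rw [ENNReal.tsum_mul_left]
    _ ≤ M * len I + M * (2 * len I) :=
        add_le_add le_rfl (mul_le_mul_right (hO I) M)
    _ = 3 * M * len I := by ring
end
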